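/- arXiv:2402.08956 — 5 statements merged into one kernel-verified Lean document; each statement's English description precedes it below -/
import Mathlib

section
/- Let f : V → V be a forwarding function on a finite vertex set V with designated destination d such that f(d) = d, and consider the directed graph with an edge from v to f(v) for every v ≠ d. Then every vertex reaches d by iterating f if and only if the underlying undirected graph on edges {v, f(v)} for v ≠ d is connected. -/
/-!
Each edge `{v, f v}` with `v ≠ d` lies on the forward orbit of `v`, so a vertex whose orbit hits `d`
is joined to `d` along that orbit. Conversely, the set of vertices whose orbit hits `d` is closed
under adjacency: if `y = f x` the orbit of `x` passes through `y`, and if `x = f y` with `y ≠ d`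
then the orbit of `y` reaches `d` only after passing through `x`. Hence it contains the whole
connected component of `d`.
-/

namespace Function

variable {V : Type*} (f : V → V) (d : V)

abbrev forwardingGraph : SimpleGraph V :=
  SimpleGraph.fromRel fun a b => a ≠ d ∧ b = f a

variable {f d}

theorem forwardingGraph_adj_apply {v : V} (hvd : v ≠ d) (hv : f v ≠ v) :
    (forwardingGraph f d).Adj v (f v) :=
  SimpleGraph.fromRel_adj _ _ _ |>.mpr ⟨hv.symm, .inl ⟨hvd, rfl⟩⟩

theorem forwardingGraph_reachable_of_iterate_eq {k : ℕ} {v : V} (h : f^[k] v = d) :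
    (forwardingGraph f d).Reachable v d := by
  induction k generalizing v with
  | zero => exact h ▸ .rfl
  | succ k ih =>
    by_cases hvd : v = d
    · exact hvd ▸ .rfl
    have hv : f v ≠ v := fun hv => hvd (by rw [← h, iterate_fixed hv])
    exact (forwardingGraph_adj_apply hvd hv).reachable.trans (ih h)

theorem exists_iterate_eq_of_forwardingGraph_adj {x y : V} (hxy : (forwardingGraph f d).Adj x y)
    (hy : ∃ k, f^[k] y = d) : ∃ k, f^[k] x = d := by
  obtain ⟨k, hk⟩ := hy
  obtain ⟨-, ⟨-, rfl⟩ | ⟨hyd, rfl⟩⟩ := SimpleGraph.fromRel_adj _ _ _ |>.mp hxy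
  · exact ⟨k + 1, hk⟩
  · cases k with
    | zero => exact absurd hk hyd
    | succ k => exact ⟨k, hk⟩

theorem exists_iterate_eq_of_forwardingGraph_reachable {v : V}
    (h : (forwardingGraph f d).Reachable v d) : ∃ k, f^[k] v = d := by
  rw [SimpleGraph.reachable_iff_reflTransGen] at h
  induction h using Relation.ReflTransGen.head_induction_on with
  | refl => exact ⟨0, rfl⟩
  | head hadj _ ih => exact exists_iterate_eq_of_forwardingGraph_adj hadj ih

theorem forwardingGraph_reachable_iff (v : V) :
    (forwardingGraph f d).Reachable v d ↔ ∃ k, f^[k] v = d :=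
  ⟨exists_iterate_eq_of_forwardingGraph_reachable,
    fun ⟨_, hk⟩ => forwardingGraph_reachable_of_iterate_eq hk⟩

end Function

theorem stmt2_general {V : Type} (f : V → V) (d : V) :
    (∀ v : V, ∃ k : ℕ, f^[k] v = d) ↔
      (SimpleGraph.fromRel (fun a b => a ≠ d ∧ b = f a)).Connected := by
  change _ ↔ (Function.forwardingGraph f d).Connected
  simp only [SimpleGraph.connected_iff_exists_forall_reachable,
    ← Function.forwardingGraph_reachable_iff]
  exact ⟨fun h => ⟨d, fun w => (h w).symm⟩, fun ⟨u, h⟩ w => (h w).symm.trans (h d)⟩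

/-- Every vertex reaches the destination `d` by iterating the forwarding function `f`
iff the underlying undirected graph (with an edge between `v` and `f v` for each
`v ≠ d`) is connected. -/
theorem stmt2 {V : Type} [Fintype V] [Nonempty V] (f : V → V) (d : V) (hd : f d = d) :
    (∀ v : V, ∃ k : ℕ, f^[k] v = d) ↔
      (SimpleGraph.fromRel (fun a b => a ≠ d ∧ b = f a)).Connected :=
  stmt2_general f d
end

section
/- Incremental loop-detection correctness (safe case): Let f : V → V with f(d) = d be loop-free (every vertex reaches d). Let x ∈ V with x ≠ d and u ∈ V, and define the updated forwarding function f' by f'(x) = u and f'(v) = f(v) for v ≠ x. If u is not in the set A = {v ∈ V : some f-path from v to d passes through x} (equivalently, u reaches d under f without passing through x), then f' is also loop-free: every vertex reaches d under f'. -/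
/-!
Along an `f`-path that never visits `x`, the updated map `f'` follows the same path. So
`f'` takes `u` to `d` along its avoiding `f`-path, hence takes `x` to `d` after one more
step. Any other vertex `v` follows its `f`-path to `d` under `f'`, unless that path visits
`x`; then `f'` brings `v` to `x` first, and from there to `d`.
-/

open Function

section

variable {α : Type*} [DecidableEq α] {f : α → α} {x y : α}

theorem iterate_update_eq_iterate {v : α} {m : ℕ} (h : ∀ j < m, f^[j] v ≠ x) :
    (update f x y)^[m] v = f^[m] v := by
  induction m generalizing v with
  | zero => rfl
  | succ m ih =>
    have hv : v ≠ x := h 0 m.succ_pos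
    rw [iterate_succ_apply, iterate_succ_apply, update_of_ne hv]
    exact ih fun j hj => by simpa only [iterate_succ_apply] using h (j + 1) (by omega)

theorem iterate_update_eq_or_exists_iterate_update_eq {v d : α} {k : ℕ} (hk : f^[k] v = d) :
    (update f x y)^[k] v = d ∨ ∃ j, (update f x y)^[j] v = x := by
  by_cases hx : ∃ j, f^[j] v = x
  · refine Or.inr ⟨Nat.find hx, ?_⟩
    rw [iterate_update_eq_iterate fun j hj => Nat.find_min hx hj]
    exact Nat.find_spec hx
  · simp only [not_exists] at hx
    exact Or.inl (hk ▸ iterate_update_eq_iterate fun j _ => hx j)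

theorem iterate_update_self_succ_eq {d : α} {k : ℕ} (hk : f^[k] y = d)
    (hy : ∀ j < k, f^[j] y ≠ x) : (update f x y)^[k + 1] x = d := by
  rw [iterate_succ_apply, update_self, iterate_update_eq_iterate hy, hk]

end

theorem stmt10_general {V : Type} [DecidableEq V] (f : V → V) (d : V)
    (hloopfree : ∀ v : V, ∃ k : ℕ, f^[k] v = d)
    (x : V) (u : V)
    (hu : ∃ k : ℕ, f^[k] u = d ∧ ∀ j : ℕ, j ≤ k → f^[j] u ≠ x) :
    ∀ v : V, ∃ k : ℕ, (Function.update f x u)^[k] v = d := by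
  obtain ⟨m, hmd, hmx⟩ := hu
  have hxd := iterate_update_self_succ_eq hmd fun j hj => hmx j hj.le
  intro v
  obtain ⟨k, hk⟩ := hloopfree v
  rcases iterate_update_eq_or_exists_iterate_update_eq (x := x) (y := u) hk with hvd | ⟨j, hvx⟩
  · exact ⟨k, hvd⟩
  · exact ⟨m + 1 + j, by rw [iterate_add_apply, hvx, hxd]⟩

/-- Incremental loop-detection correctness (safe case): if `f` is loop-free and the
new next hop `u` of `x` reaches `d` under `f` without passing through `x`, then the
updated forwarding function is also loop-free. -/
theorem stmt10 {V : Type} [Fintype V] [DecidableEq V] (f : V → V) (d : V) (hd : f d = d)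
    (hloopfree : ∀ v : V, ∃ k : ℕ, f^[k] v = d)
    (x : V) (hx : x ≠ d) (u : V)
    (hu : ∃ k : ℕ, f^[k] u = d ∧ ∀ j : ℕ, j ≤ k → f^[j] u ≠ x) :
    ∀ v : V, ∃ k : ℕ, (Function.update f x u)^[k] v = d :=
  stmt10_general f d hloopfree x u hu
end

section
/- Incremental loop-detection correctness (loop case): With notation as above, if u ∈ A, i.e., every f'-path from u toward d would pass through x (equivalently, u's path to d under the original f passes through x), then under the updated function f' the vertex x lies on a cycle not containing d, and hence x does not reach d under f'. -/
/-!
Let `n` be the first time the `f`-path of `u` visits `x`. Before time `n` that path avoids `x`,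
so `f' = update f x u` follows it unchanged; hence `f'` sends `x` to `u` and then along
`u, f u, …, f^[n] u = x`, a cycle through `x` of length `n + 1`. Every vertex of this cycle is
`x ≠ d` or lies on the `f`-path of `u` before it reaches `x`, which avoids `d` by hypothesis.
-/

open Function

section update

variable {α : Type*} [DecidableEq α]

theorem iterate_update_of_forall_iterate_ne (f : α → α) {x a : α} (y : α) {n : ℕ}
    (h : ∀ i < n, f^[i] a ≠ x) : (update f x y)^[n] a = f^[n] a := by
  induction n with
  | zero => rfl
  | succ n ih =>
    rw [iterate_succ_apply', iterate_succ_apply', ih fun i hi => h i (by omega),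
      update_of_ne (h n n.lt_succ_self)]

theorem iterate_succ_update_self {f : α → α} {x u : α} {n : ℕ}
    (hmin : ∀ i < n, f^[i] u ≠ x) : (update f x u)^[n + 1] x = f^[n] u := by
  rw [iterate_succ_apply, update_self, iterate_update_of_forall_iterate_ne f u hmin]

theorem isPeriodicPt_update_self {f : α → α} {x u : α} {n : ℕ} (hn : f^[n] u = x)
    (hmin : ∀ i < n, f^[i] u ≠ x) : IsPeriodicPt (update f x u) (n + 1) x :=
  (iterate_succ_update_self hmin).trans hn

end update

theorem Function.IsPeriodicPt.iterate_ne_of_forall_lt {α : Type*} {g : α → α} {x d : α} {n : ℕ}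
    (hper : IsPeriodicPt g n x) (hn : 0 < n) (h : ∀ r < n, g^[r] x ≠ d) (i : ℕ) :
    g^[i] x ≠ d :=
  hper.iterate_mod_apply i ▸ h _ (Nat.mod_lt i hn)

theorem stmt11_general {V : Type} [DecidableEq V] (f : V → V) (d : V)
    (x : V) (hx : x ≠ d) (u : V)
    (hu : ∃ j : ℕ, f^[j] u = x ∧ ∀ i : ℕ, i ≤ j → f^[i] u ≠ d) :
    (∃ k : ℕ, 1 ≤ k ∧ (Function.update f x u)^[k] x = x) ∧
      (∀ i : ℕ, (Function.update f x u)^[i] x ≠ d) := by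
  obtain ⟨j, hjx, hjd⟩ := hu
  have hreach : ∃ n, f^[n] u = x := ⟨j, hjx⟩
  set n := Nat.find hreach
  have hmin : ∀ i < n, f^[i] u ≠ x := fun i hi => Nat.find_min hreach hi
  have hnj : n ≤ j := Nat.find_min' hreach hjx
  have hper := isPeriodicPt_update_self (Nat.find_spec hreach) hmin
  refine ⟨⟨n + 1, Nat.le_add_left 1 n, hper⟩, hper.iterate_ne_of_forall_lt n.succ_pos ?_⟩
  rintro (_ | s) hs
  · exact hx
  · rw [iterate_succ_update_self fun i hi => hmin i (by omega)]
    exact hjd s (by omega)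

/-- Incremental loop-detection correctness (loop case): if the new next hop `u` of
`x` has its `f`-path to `d` passing through `x`, then under the updated function
`x` lies on a cycle not containing `d`, and hence `x` never reaches `d`. -/
theorem stmt11 {V : Type} [Fintype V] [DecidableEq V] (f : V → V) (d : V) (hd : f d = d)
    (hloopfree : ∀ v : V, ∃ k : ℕ, f^[k] v = d)
    (x : V) (hx : x ≠ d) (u : V)
    (hu : ∃ j : ℕ, f^[j] u = x ∧ ∀ i : ℕ, i ≤ j → f^[i] u ≠ d) :
    (∃ k : ℕ, 1 ≤ k ∧ (Function.update f x u)^[k] x = x) ∧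
      (∀ i : ℕ, (Function.update f x u)^[i] x ≠ d) :=
  stmt11_general f d x hx u hu
end

section
/- Incremental verification suffices: With f loop-free, x ≠ d, and f' the single-edge update f'(x) = u, the updated forwarding state f' is loop-free (all vertices reach d under f') if and only if x reaches d under f'. That is, checking only the path of the updating node x suffices to verify global loop-freedom. -/
/-- The `g`-orbit of `v` follows its `f`-orbit until it either reaches `d` or meets `x`;
in the latter case it continues along the `g`-orbit of `x`. -/
theorem exists_iterate_eq_of_eq_off {α : Type*} {f g : α → α} {x d : α}
    (hfg : ∀ v, v ≠ x → g v = f v) (hx : ∃ k, g^[k] x = d) :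
    ∀ k v, f^[k] v = d → ∃ m, g^[m] v = d := by
  intro k
  induction k with
  | zero => exact fun v hv => ⟨0, hv⟩
  | succ k ih =>
    intro v hv
    by_cases hvx : v = x
    · exact hvx ▸ hx
    · obtain ⟨m, hm⟩ := ih (f v) hv
      exact ⟨m + 1, by rw [Function.iterate_succ_apply, hfg v hvx, hm]⟩

theorem stmt12_general {V : Type} [DecidableEq V] (f : V → V) (d : V)
    (hloopfree : ∀ v : V, ∃ k : ℕ, f^[k] v = d)
    (x : V) (u : V) :
    (∀ v : V, ∃ k : ℕ, (Function.update f x u)^[k] v = d) ↔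
      (∃ k : ℕ, (Function.update f x u)^[k] x = d) := by
  refine ⟨fun h => h x, fun hx v => ?_⟩
  obtain ⟨k, hk⟩ := hloopfree v
  exact exists_iterate_eq_of_eq_off (fun w hw => Function.update_of_ne hw u f) hx k v hk

/-- Incremental verification suffices: for a loop-free `f` and a single-edge update
`f' = f[x ↦ u]` with `x ≠ d`, the updated state is loop-free iff `x` itself
reaches `d` under `f'`. -/
theorem stmt12 {V : Type} [Fintype V] [DecidableEq V] (f : V → V) (d : V) (hd : f d = d)
    (hloopfree : ∀ v : V, ∃ k : ℕ, f^[k] v = d)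
    (x : V) (hx : x ≠ d) (u : V) :
    (∀ v : V, ∃ k : ℕ, (Function.update f x u)^[k] v = d) ↔
      (∃ k : ℕ, (Function.update f x u)^[k] x = d) :=
  stmt12_general f d hloopfree x u
end

section
/- Waypoint characterization: Let f : V → V with f(d) = d and suppose v reaches d under f, with k the least index such that f^k(v) = d. Then a vertex w lies on the forwarding path from v to d if and only if f^j(v) = w for some j ≤ k, and this holds if and only if w reaches d under f and the least index k_w with f^{k_w}(w) = d satisfies k_w ≤ k and f^{k - k_w}(v) = w. -/
section FirstHit

variable {α : Type*} (f : α → α) {v d : α} {j k : ℕ}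

theorem Function.iterate_sub_iterate_apply_eq (hj : j ≤ k) (hk : f^[k] v = d) :
    f^[k - j] (f^[j] v) = d := by
  rw [← Function.iterate_add_apply, Nat.sub_add_cancel hj, hk]

theorem Function.iterate_iterate_ne_of_lt_sub (hkmin : ∀ i < k, f^[i] v ≠ d) :
    ∀ i < k - j, f^[i] (f^[j] v) ≠ d := fun i hi => by
  rw [← Function.iterate_add_apply]
  exact hkmin (i + j) (by omega)

end FirstHit

theorem stmt16_general {V : Type} (f : V → V) (d : V)
    (v : V) (k : ℕ) (hk : f^[k] v = d) (hkmin : ∀ j : ℕ, j < k → f^[j] v ≠ d)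
    (w : V) :
    (∃ j : ℕ, j ≤ k ∧ f^[j] v = w) ↔
      (∃ kw : ℕ, f^[kw] w = d ∧ (∀ j : ℕ, j < kw → f^[j] w ≠ d) ∧
        kw ≤ k ∧ f^[k - kw] v = w) := by
  constructor
  · rintro ⟨j, hj, rfl⟩
    exact ⟨k - j, f.iterate_sub_iterate_apply_eq hj hk,
      f.iterate_iterate_ne_of_lt_sub hkmin, Nat.sub_le k j, by rw [Nat.sub_sub_self hj]⟩
  · rintro ⟨kw, -, -, -, hw⟩
    exact ⟨k - kw, Nat.sub_le k kw, hw⟩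

/-- Waypoint characterization: `w` lies on the forwarding path from `v` to `d`
(i.e. `w = f^[j] v` for some `j ≤ k`, with `k` minimal such that `f^[k] v = d`)
iff `w` reaches `d` with minimal hop count `k_w ≤ k` and `f^[k - k_w] v = w`. -/
theorem stmt16 {V : Type} [Fintype V] (f : V → V) (d : V) (hd : f d = d)
    (v : V) (k : ℕ) (hk : f^[k] v = d) (hkmin : ∀ j : ℕ, j < k → f^[j] v ≠ d)
    (w : V) :
    (∃ j : ℕ, j ≤ k ∧ f^[j] v = w) ↔
      (∃ kw : ℕ, f^[kw] w = d ∧ (∀ j : ℕ, j < kw → f^[j] w ≠ d) ∧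
        kw ≤ k ∧ f^[k - kw] v = w) :=
  stmt16_general f d v k hk hkmin w
end
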